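/- Let u be a bounded C² solution of the system Δu = ∇H(u) on ℝ^N with each |∇u_i| bounded, and suppose there are constants a = (a_1,…,a_m) such that for every x' ∈ ℝ^{N−1} and every i, u_i(x', x_N) → a_i as x_N → +∞. Set u^t(x', x_N) := u(x', x_N + t) and E_R(w) := ∫_{B_R} ( ½ Σ_i |∇w_i|² + H(w) − H(a) ) dx. Then for every fixed R > 0, lim_{t → +∞} E_R(u^t) = 0. -/

import Mathlib

open MeasureTheory Metric Filter Finset

noncomputable section

/-- Partial derivative of `f` at `x` in the `k`-th coordinate direction of `ℝ^N`. -/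
def pd {N : ℕ} (f : EuclideanSpace ℝ (Fin N) → ℝ) (k : Fin N)
    (x : EuclideanSpace ℝ (Fin N)) : ℝ :=
  fderiv ℝ f x (EuclideanSpace.single k 1)

/-- Laplacian of `f` at `x`: the sum of the pure second partial derivatives. -/
def lap {N : ℕ} (f : EuclideanSpace ℝ (Fin N) → ℝ) (x : EuclideanSpace ℝ (Fin N)) : ℝ :=
  ∑ k, pd (pd f k) k x

/-- `H_{u_i}`, the `i`-th partial derivative of `H : ℝ^m → ℝ`. -/
def Hp {m : ℕ} (H : EuclideanSpace ℝ (Fin m) → ℝ) (i : Fin m)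
    (p : EuclideanSpace ℝ (Fin m)) : ℝ :=
  fderiv ℝ H p (EuclideanSpace.single i 1)

/-- `H_{u_i u_j}`, the second mixed partial derivative of `H : ℝ^m → ℝ`. -/
def Hpp {m : ℕ} (H : EuclideanSpace ℝ (Fin m) → ℝ) (i j : Fin m)
    (p : EuclideanSpace ℝ (Fin m)) : ℝ :=
  fderiv ℝ (Hp H i) p (EuclideanSpace.single j 1)

/-- `u` solves the system `Δ u = ∇H(u)` on `Ω`. -/
def IsSolution {N m : ℕ} (H : EuclideanSpace ℝ (Fin m) → ℝ)
    (u : EuclideanSpace ℝ (Fin N) → EuclideanSpace ℝ (Fin m))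
    (Ω : Set (EuclideanSpace ℝ (Fin N))) : Prop :=
  ∀ i : Fin m, ∀ x ∈ Ω, lap (fun y => u y i) x = Hp H i (u x)

/-- `u` is a stable solution of `Δ u = ∇H(u)` on `Ω`: the second variation of the
energy is nonnegative on test functions `ζ_1, …, ζ_m ∈ C¹_c(Ω)`. -/
def Stable {N m : ℕ} (H : EuclideanSpace ℝ (Fin m) → ℝ)
    (u : EuclideanSpace ℝ (Fin N) → EuclideanSpace ℝ (Fin m))
    (Ω : Set (EuclideanSpace ℝ (Fin N))) : Prop :=
  ∀ ζ : Fin m → EuclideanSpace ℝ (Fin N) → ℝ,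
    (∀ i, ContDiff ℝ 1 (ζ i)) → (∀ i, HasCompactSupport (ζ i)) →
    (∀ i, tsupport (ζ i) ⊆ Ω) →
    0 ≤ (∑ i, ∫ x in Ω, ‖gradient (ζ i) x‖ ^ 2) +
        ∑ i, ∑ j, ∫ x in Ω, Hpp H i j (u x) * ζ i x * ζ j x

/-- `u` is a pointwise stable solution of `Δ u = ∇H(u)` on `Ω`: there are `λ ≥ 0`
and nowhere-vanishing `C²` functions `φ_i` with `Δ φ_i = Σ_j H_{u_i u_j}(u) φ_j - λ φ_i`
and `H_{u_i u_j}(u) φ_i φ_j ≤ 0` for `i < j`. -/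
def PointwiseStable {N m : ℕ} (H : EuclideanSpace ℝ (Fin m) → ℝ)
    (u : EuclideanSpace ℝ (Fin N) → EuclideanSpace ℝ (Fin m))
    (Ω : Set (EuclideanSpace ℝ (Fin N))) : Prop :=
  ∃ (lam : ℝ) (φ : Fin m → EuclideanSpace ℝ (Fin N) → ℝ),
    0 ≤ lam ∧ (∀ i, ContDiff ℝ 2 (φ i)) ∧ (∀ i, ∀ x ∈ Ω, φ i x ≠ 0) ∧
    (∀ i, ∀ x ∈ Ω, lap (φ i) x = (∑ j, Hpp H i j (u x) * φ j x) - lam * φ i x) ∧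
    (∀ i j : Fin m, i < j → ∀ x ∈ Ω, Hpp H i j (u x) * φ i x * φ j x ≤ 0)

/-- The system `Δ u = ∇H(u)` is orientable along `u`: there exist nonzero `C¹`
functions `θ_i`, none of which changes sign, with `H_{u_i u_j}(u) θ_i θ_j ≤ 0` for `i < j`. -/
def OrientableAlong {N m : ℕ} (H : EuclideanSpace ℝ (Fin m) → ℝ)
    (u : EuclideanSpace ℝ (Fin N) → EuclideanSpace ℝ (Fin m)) : Prop :=
  ∃ θ : Fin m → EuclideanSpace ℝ (Fin N) → ℝ,
    (∀ i, ContDiff ℝ 1 (θ i)) ∧ (∀ i, ∃ x, θ i x ≠ 0) ∧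
    (∀ i, (∀ x, 0 ≤ θ i x) ∨ (∀ x, θ i x ≤ 0)) ∧
    (∀ i j : Fin m, i < j → ∀ x, Hpp H i j (u x) * θ i x * θ j x ≤ 0)

/-- A function `w : ℝ^N → ℝ` is one-dimensional. -/
def OneDim {N : ℕ} (w : EuclideanSpace ℝ (Fin N) → ℝ) : Prop :=
  ∃ (a : EuclideanSpace ℝ (Fin N)) (g : ℝ → ℝ), ∀ x, w x = g (inner ℝ a x)

/-- `u` is an `H`-monotone solution with respect to the coordinate direction `ν`. -/
def HMonotone {N m : ℕ} (H : EuclideanSpace ℝ (Fin m) → ℝ)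
    (u : EuclideanSpace ℝ (Fin N) → EuclideanSpace ℝ (Fin m)) (ν : Fin N) : Prop :=
  (∀ (i : Fin m) (x : EuclideanSpace ℝ (Fin N)), pd (fun y => u y i) ν x ≠ 0) ∧
  (∀ i j : Fin m, i < j → ∀ x,
    Hpp H i j (u x) * (pd (fun y => u y i) ν x * pd (fun y => u y j) ν x) ≤ 0)

/-- The point `(x', t) ∈ ℝ^{n+1}` built from `x' ∈ ℝ^n` and a last coordinate `t`. -/
def snocPt {n : ℕ} (x' : EuclideanSpace ℝ (Fin n)) (t : ℝ) :
    EuclideanSpace ℝ (Fin (n + 1)) := WithLp.toLp 2 (Fin.snoc (α := fun _ => ℝ) x'.ofLp t)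


/-!
Test the equation `Δu_i^t = H_{u_i}(u^t)` against `ζ² (u_i^t - a_i)`, where `ζ` is a cutoff equal
to `1` on `B_R`. Integrating by parts, `∫ ζ² |∇u_i^t|²` becomes the integral of `ζ (u_i^t - a_i)`
times a factor that is bounded uniformly in `t` (by the bounds on `u`, `∇u` and on `∇H` over the
bounded range of `u`). Since `u_i^t → a_i` pointwise, dominated convergence makes it vanish in the
limit; the potential term `H(u^t) - H(a)` is bounded and tends to `0` pointwise as well.
-/

open scoped Gradient InnerProductSpace Topology

section Gradient

variable {F : Type*} [NormedAddCommGroup F] [InnerProductSpace ℝ F] [CompleteSpace F]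

theorem ContDiff.continuous_gradient {f : F → ℝ} (hf : ContDiff ℝ 1 f) : Continuous (∇ f) :=
  (InnerProductSpace.toDual ℝ F).symm.continuous.comp (hf.continuous_fderiv one_ne_zero)

theorem gradient_comp_add_right (f : F → ℝ) (c x : F) :
    ∇ (fun y => f (y + c)) x = ∇ f (x + c) := by
  simp only [gradient, fderiv_comp_add_right]

theorem norm_gradient_eq_norm_fderiv (f : F → ℝ) (x : F) : ‖∇ f x‖ = ‖fderiv ℝ f x‖ :=
  (InnerProductSpace.toDual ℝ F).symm.norm_map _

end Gradient

section Euclidean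

variable {N : ℕ}

theorem pd_eq_gradient_apply (f : EuclideanSpace ℝ (Fin N) → ℝ) (k : Fin N)
    (x : EuclideanSpace ℝ (Fin N)) : pd f k x = ∇ f x k := by
  rw [pd, ← inner_gradient_left, EuclideanSpace.inner_single_right]
  simp

theorem inner_gradient_eq_sum_pd (f g : EuclideanSpace ℝ (Fin N) → ℝ)
    (x : EuclideanSpace ℝ (Fin N)) : ⟪∇ f x, ∇ g x⟫_ℝ = ∑ k, pd f k x * pd g k x := by
  simp only [PiLp.inner_apply, pd_eq_gradient_apply, RCLike.inner_apply, conj_trivial, mul_comm]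

theorem continuous_pd {f : EuclideanSpace ℝ (Fin N) → ℝ} (hf : ContDiff ℝ 1 f) (k : Fin N) :
    Continuous (pd f k) :=
  (hf.continuous_fderiv one_ne_zero).clm_apply continuous_const

theorem contDiff_pd {f : EuclideanSpace ℝ (Fin N) → ℝ} (hf : ContDiff ℝ 2 f) (k : Fin N) :
    ContDiff ℝ 1 (pd f k) :=
  (hf.fderiv_right (by norm_num)).clm_apply contDiff_const

theorem continuous_lap {f : EuclideanSpace ℝ (Fin N) → ℝ} (hf : ContDiff ℝ 2 f) :
    Continuous (lap f) :=
  continuous_finsetSum _ fun k _ => continuous_pd (contDiff_pd hf k) k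

theorem pd_comp_add_right (f : EuclideanSpace ℝ (Fin N) → ℝ) (k : Fin N)
    (c x : EuclideanSpace ℝ (Fin N)) : pd (fun y => f (y + c)) k x = pd f k (x + c) := by
  simp only [pd, fderiv_comp_add_right]

theorem lap_comp_add_right (f : EuclideanSpace ℝ (Fin N) → ℝ) (c x : EuclideanSpace ℝ (Fin N)) :
    lap (fun y => f (y + c)) x = lap f (x + c) := by
  have h (k : Fin N) : pd (fun y => f (y + c)) k = fun y => pd f k (y + c) :=
    funext (pd_comp_add_right f k c)
  simp only [lap, h, pd_comp_add_right]

theorem integral_mul_lap_eq_neg_integral_inner_gradient {f w : EuclideanSpace ℝ (Fin N) → ℝ}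
    (hf : ContDiff ℝ 1 f) (hfc : HasCompactSupport f) (hw : ContDiff ℝ 2 w) :
    ∫ x, f x * lap w x = -∫ x, ⟪∇ f x, ∇ w x⟫_ℝ := by
  have hf' : Differentiable ℝ f := hf.differentiable one_ne_zero
  have hw' (k : Fin N) : Differentiable ℝ (pd w k) := (contDiff_pd hw k).differentiable one_ne_zero
  have int_f_pd (k : Fin N) : Integrable fun x => f x * pd w k x :=
    (hf.continuous.mul (contDiff_pd hw k).continuous).integrable_of_hasCompactSupport
      hfc.mul_right
  have int_f_pd_pd (k : Fin N) : Integrable fun x => f x * pd (pd w k) k x :=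
    (hf.continuous.mul (continuous_pd (contDiff_pd hw k) k)).integrable_of_hasCompactSupport
      hfc.mul_right
  have int_pd_pd (k : Fin N) : Integrable fun x => pd f k x * pd w k x :=
    ((continuous_pd hf k).mul (continuous_pd (hw.of_le one_le_two) k))
      |>.integrable_of_hasCompactSupport
      (hfc.fderiv_apply (𝕜 := ℝ) _).mul_right
  calc ∫ x, f x * lap w x = ∑ k, ∫ x, f x * pd (pd w k) k x := by
        simp_rw [lap, Finset.mul_sum]
        exact integral_finsetSum _ fun k _ => int_f_pd_pd k
    _ = ∑ k, -∫ x, pd f k x * pd w k x := Finset.sum_congr rfl fun k _ =>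
        integral_mul_fderiv_eq_neg_fderiv_mul_of_integrable (int_pd_pd k) (int_f_pd_pd k)
          (int_f_pd k) (fun x _ => hf' x) (fun x _ => hw' k x)
    _ = -∫ x, ⟪∇ f x, ∇ w x⟫_ℝ := by
        simp_rw [inner_gradient_eq_sum_pd]
        rw [integral_finsetSum _ fun k _ => int_pd_pd k, Finset.sum_neg_distrib]

/-- Green's identity tested against `ζ² (w - c)`. -/
theorem integral_sq_mul_norm_gradient_sq {ζ w : EuclideanSpace ℝ (Fin N) → ℝ}
    (hζ : ContDiff ℝ 1 ζ) (hζc : HasCompactSupport ζ) (hw : ContDiff ℝ 2 w) (c : ℝ) :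
    ∫ x, ζ x ^ 2 * ‖∇ w x‖ ^ 2 =
      -∫ x, ζ x * ((w x - c) * (2 * ⟪∇ ζ x, ∇ w x⟫_ℝ + ζ x * lap w x)) := by
  have hζ' : Differentiable ℝ ζ := hζ.differentiable one_ne_zero
  have hw' : Differentiable ℝ w := hw.differentiable two_ne_zero
  have integrable_mul {g : EuclideanSpace ℝ (Fin N) → ℝ} (hg : Continuous g) :
      Integrable fun x => ζ x * g x :=
    (hζ.continuous.mul hg).integrable_of_hasCompactSupport hζc.mul_right
  have := hw.continuous
  have := hζ.continuous_gradient
  have := (hw.of_le one_le_two).continuous_gradient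
  have := continuous_lap hw
  have hA : Integrable fun x => ζ x * (ζ x * ‖∇ w x‖ ^ 2) := integrable_mul (by fun_prop)
  have hB : Integrable fun x => ζ x * ((w x - c) * (2 * ⟪∇ ζ x, ∇ w x⟫_ℝ)) :=
    integrable_mul (by fun_prop)
  have hD : Integrable fun x => ζ x * (ζ x * ((w x - c) * lap w x)) := integrable_mul (by fun_prop)
  have hinner (x : EuclideanSpace ℝ (Fin N)) :
      ⟪∇ (fun y => ζ y * (ζ y * (w y - c))) x, ∇ w x⟫_ℝ =
        ζ x * (ζ x * ‖∇ w x‖ ^ 2) + ζ x * ((w x - c) * (2 * ⟪∇ ζ x, ∇ w x⟫_ℝ)) := by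
    rw [inner_gradient_left, fderiv_fun_mul (hζ' x) (by fun_prop),
      fderiv_fun_mul (hζ' x) (by fun_prop), fderiv_sub_const]
    simp only [add_apply, smul_apply, smul_eq_mul,
      ← inner_gradient_left, real_inner_self_eq_norm_sq]
    ring
  have green := integral_mul_lap_eq_neg_integral_inner_gradient
    (f := fun x => ζ x * (ζ x * (w x - c)))
    (hζ.mul (hζ.mul ((hw.of_le one_le_two).sub contDiff_const))) hζc.mul_right hw
  simp only [hinner, integral_add hA hB, mul_assoc] at green
  calc ∫ x, ζ x ^ 2 * ‖∇ w x‖ ^ 2 = ∫ x, ζ x * (ζ x * ‖∇ w x‖ ^ 2) := by simp only [sq, mul_assoc]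
    _ = -((∫ x, ζ x * ((w x - c) * (2 * ⟪∇ ζ x, ∇ w x⟫_ℝ))) +
          ∫ x, ζ x * (ζ x * ((w x - c) * lap w x))) := by linarith
    _ = _ := by
      rw [← integral_add hB hD]
      congr 2 with x
      ring

end Euclidean

theorem tendsto_integral_mul_of_bounded_of_tendsto_zero {α ι : Type*} [MeasurableSpace α]
    {μ : Measure α} {l : Filter ι} [l.IsCountablyGenerated] {g : α → ℝ} {G : ι → α → ℝ} {C : ℝ}
    (hg : Integrable g μ) (hGm : ∀ t, AEStronglyMeasurable (G t) μ) (hGC : ∀ t x, |G t x| ≤ C)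
    (hG : ∀ x, Tendsto (G · x) l (𝓝 0)) :
    Tendsto (fun t => ∫ x, g x * G t x ∂μ) l (𝓝 0) := by
  have := tendsto_integral_filter_of_dominated_convergence (fun x => ‖g x‖ * C)
    (.of_forall fun t => hg.aestronglyMeasurable.mul (hGm t))
    (.of_forall fun t => .of_forall fun x => by
      rw [Pi.mul_apply, norm_mul]; exact mul_le_mul_of_nonneg_left (hGC t x) (norm_nonneg _))
    (hg.norm.mul_const C) (.of_forall fun x => by simpa using (hG x).const_mul (g x))
  rwa [integral_zero] at this

theorem tendsto_integral_sq_mul_norm_gradient_sq {N : ℕ} {ι : Type*} {l : Filter ι}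
    [l.IsCountablyGenerated] {ζ : EuclideanSpace ℝ (Fin N) → ℝ} (hζ : ContDiff ℝ 1 ζ)
    (hζc : HasCompactSupport ζ) {w : ι → EuclideanSpace ℝ (Fin N) → ℝ} {c B₀ B₁ B₂ : ℝ}
    (hw : ∀ t, ContDiff ℝ 2 (w t)) (hw₀ : ∀ t x, |w t x| ≤ B₀)
    (hw₁ : ∀ t x, ‖∇ (w t) x‖ ≤ B₁) (hw₂ : ∀ t x, |lap (w t) x| ≤ B₂)
    (hlim : ∀ x, Tendsto (fun t => w t x) l (𝓝 c)) :
    Tendsto (fun t => ∫ x, ζ x ^ 2 * ‖∇ (w t) x‖ ^ 2) l (𝓝 0) := by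
  obtain ⟨C₀, hC₀⟩ := hζ.continuous.bounded_above_of_compact_support hζc
  obtain ⟨C₁, hC₁⟩ : ∃ C, ∀ x, ‖∇ ζ x‖ ≤ C := by
    obtain ⟨C, hC⟩ :=
      (hζ.continuous_fderiv one_ne_zero).bounded_above_of_compact_support (hζc.fderiv (𝕜 := ℝ))
    exact ⟨C, fun x => (norm_gradient_eq_norm_fderiv _ _).trans_le (hC x)⟩
  have hψ (t : ι) (x : EuclideanSpace ℝ (Fin N)) :
      |2 * ⟪∇ ζ x, ∇ (w t) x⟫_ℝ + ζ x * lap (w t) x| ≤ 2 * (C₁ * B₁) + C₀ * B₂ := by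
    have hinner : |⟪∇ ζ x, ∇ (w t) x⟫_ℝ| ≤ C₁ * B₁ :=
      (abs_real_inner_le_norm _ _).trans
        (mul_le_mul (hC₁ x) (hw₁ t x) (norm_nonneg _) ((norm_nonneg _).trans (hC₁ x)))
    calc _ ≤ |2 * ⟪∇ ζ x, ∇ (w t) x⟫_ℝ| + |ζ x * lap (w t) x| := abs_add_le _ _
      _ = 2 * |⟪∇ ζ x, ∇ (w t) x⟫_ℝ| + ‖ζ x‖ * |lap (w t) x| := by
        rw [abs_mul, abs_mul, abs_two, Real.norm_eq_abs]
      _ ≤ 2 * (C₁ * B₁) + C₀ * B₂ := by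
        gcongr
        · exact (norm_nonneg _).trans (hC₀ x)
        · exact hC₀ x
        · exact hw₂ t x
  set G : ι → EuclideanSpace ℝ (Fin N) → ℝ :=
    fun t x => (w t x - c) * (2 * ⟪∇ ζ x, ∇ (w t) x⟫_ℝ + ζ x * lap (w t) x)
  have hGm (t : ι) : AEStronglyMeasurable (G t) := by
    have := (hw t).continuous
    have := ((hw t).of_le one_le_two).continuous_gradient
    have := hζ.continuous_gradient
    have := continuous_lap (hw t)
    have := hζ.continuous
    exact Continuous.aestronglyMeasurable (by fun_prop)
  have hGC (t : ι) (x : EuclideanSpace ℝ (Fin N)) :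
      |G t x| ≤ (B₀ + |c|) * (2 * (C₁ * B₁) + C₀ * B₂) := by
    have hwc : |w t x - c| ≤ B₀ + |c| := (abs_sub _ _).trans (by linarith [hw₀ t x])
    rw [abs_mul]
    exact mul_le_mul hwc (hψ t x) (abs_nonneg _) ((abs_nonneg _).trans hwc)
  have hG (x : EuclideanSpace ℝ (Fin N)) : Tendsto (G · x) l (𝓝 0) := by
    refine Tendsto.zero_mul_isBoundedUnder_le ?_ (isBoundedUnder_of ⟨_, fun t => by
      simpa only [Function.comp_apply, Real.norm_eq_abs] using hψ t x⟩)
    simpa using (hlim x).sub_const c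
  have := (tendsto_integral_mul_of_bounded_of_tendsto_zero
    (hζ.continuous.integrable_of_hasCompactSupport hζc) hGm hGC hG).neg
  rw [neg_zero] at this
  exact this.congr fun t => (integral_sq_mul_norm_gradient_sq hζ hζc (hw t) c).symm

theorem tendsto_setIntegral_ball_norm_gradient_sq {N : ℕ} {ι : Type*} {l : Filter ι}
    [l.IsCountablyGenerated] {w : ι → EuclideanSpace ℝ (Fin N) → ℝ} {c B₀ B₁ B₂ : ℝ}
    (hw : ∀ t, ContDiff ℝ 2 (w t)) (hw₀ : ∀ t x, |w t x| ≤ B₀)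
    (hw₁ : ∀ t x, ‖∇ (w t) x‖ ≤ B₁) (hw₂ : ∀ t x, |lap (w t) x| ≤ B₂)
    (hlim : ∀ x, Tendsto (fun t => w t x) l (𝓝 c)) (R : ℝ) :
    Tendsto (fun t => ∫ x in ball 0 R, ‖∇ (w t) x‖ ^ 2) l (𝓝 0) := by
  let ζ : ContDiffBump (0 : EuclideanSpace ℝ (Fin N)) :=
    ⟨max R 1, max R 1 + 1, by positivity, by linarith⟩
  have hζ : ContDiff ℝ 1 ζ := ζ.contDiff
  refine squeeze_zero (fun t => setIntegral_nonneg measurableSet_ball fun x _ => by positivity)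
    (fun t => ?_)
    (tendsto_integral_sq_mul_norm_gradient_sq hζ ζ.hasCompactSupport hw hw₀ hw₁ hw₂ hlim)
  have hint : Integrable fun x => ζ x ^ 2 * ‖∇ (w t) x‖ ^ 2 := by
    have := ((hw t).of_le one_le_two).continuous_gradient
    have := hζ.continuous
    refine (by fun_prop : Continuous fun x => ζ x ^ 2 * ‖∇ (w t) x‖ ^ 2)
      |>.integrable_of_hasCompactSupport ?_
    exact (ζ.hasCompactSupport.comp_left (g := (· ^ 2)) (zero_pow two_ne_zero)).mul_right
  calc ∫ x in ball 0 R, ‖∇ (w t) x‖ ^ 2 = ∫ x in ball 0 R, ζ x ^ 2 * ‖∇ (w t) x‖ ^ 2 :=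
        setIntegral_congr_fun measurableSet_ball fun x hx => by
          rw [ζ.one_of_mem_closedBall (closedBall_subset_closedBall (le_max_left R 1)
            (ball_subset_closedBall hx))]
          ring
    _ ≤ ∫ x, ζ x ^ 2 * ‖∇ (w t) x‖ ^ 2 :=
        setIntegral_le_integral hint (.of_forall fun x => by positivity)

theorem tendsto_setIntegral_comp_sub_of_tendsto {α ι X : Type*} [MeasurableSpace α]
    [TopologicalSpace α] [OpensMeasurableSpace α] [TopologicalSpace X] {μ : Measure α}
    {s : Set α} (hs : μ s ≠ ⊤) {l : Filter ι} [l.IsCountablyGenerated] {H : X → ℝ}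
    (hH : Continuous H) {K : Set X} (hK : IsCompact K) {v : ι → α → X}
    (hv : ∀ t, Continuous (v t)) (hvK : ∀ t x, v t x ∈ K) {a : X}
    (hlim : ∀ x, Tendsto (v · x) l (𝓝 a)) :
    Tendsto (fun t => ∫ x in s, (H (v t x) - H a) ∂μ) l (𝓝 0) := by
  obtain ⟨C, hC⟩ := hK.exists_bound_of_continuousOn hH.continuousOn
  simpa using tendsto_integral_mul_of_bounded_of_tendsto_zero (μ := μ.restrict s)
    (g := fun _ => 1) (C := C + |H a|) (integrableOn_const hs)
    (fun t => ((hH.comp (hv t)).sub continuous_const).aestronglyMeasurable)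
    (fun t x => (abs_sub _ _).trans (by simpa using hC _ (hvK t x)))
    (fun x => by simpa using ((hH.tendsto a).comp (hlim x)).sub_const (H a))

theorem add_smul_single_last_eq_snocPt {n : ℕ} (x : EuclideanSpace ℝ (Fin (n + 1))) (t : ℝ) :
    x + t • EuclideanSpace.single (Fin.last n) 1 =
      snocPt (WithLp.toLp 2 fun j => x j.castSucc) (x (Fin.last n) + t) := by
  ext j
  induction j using Fin.lastCases with
  | last => simp [snocPt]
  | cast j => simp [snocPt, (Fin.castSucc_lt_last j).ne]

theorem tendsto_comp_add_smul_single_last {n : ℕ} {Y : Type*} [TopologicalSpace Y]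
    {f : EuclideanSpace ℝ (Fin (n + 1)) → Y} {c : Y}
    (hf : ∀ x', Tendsto (fun s => f (snocPt x' s)) atTop (𝓝 c))
    (x : EuclideanSpace ℝ (Fin (n + 1))) :
    Tendsto (fun t : ℝ => f (x + t • EuclideanSpace.single (Fin.last n) 1)) atTop (𝓝 c) := by
  simp_rw [add_smul_single_last_eq_snocPt]
  exact (hf _).comp (tendsto_atTop_add_const_left _ _ tendsto_id)

theorem exists_isCompact_forall_mem_of_abs_le {α : Type*} {m : ℕ}
    (v : α → EuclideanSpace ℝ (Fin m)) (hv : ∀ i, ∃ B, ∀ x, |v x i| ≤ B) :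
    ∃ K, IsCompact K ∧ ∀ x, v x ∈ K := by
  choose B hB using hv
  exact ⟨WithLp.toLp 2 '' Set.univ.pi fun i => Set.Icc (-B i) (B i),
    (isCompact_univ_pi fun _ => isCompact_Icc).image (PiLp.continuous_toLp 2 _),
    fun x => ⟨(v x).ofLp, fun i _ => abs_le.1 (hB i x), WithLp.toLp_ofLp _ _⟩⟩

/-- `E_R(w)`. -/
def localEnergy {N m : ℕ} (H : EuclideanSpace ℝ (Fin m) → ℝ) (a : EuclideanSpace ℝ (Fin m))
    (R : ℝ) (w : EuclideanSpace ℝ (Fin N) → EuclideanSpace ℝ (Fin m)) : ℝ :=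
  ∫ x in ball 0 R, ((1 / 2) * ∑ i, ‖∇ (fun y => w y i) x‖ ^ 2 + H (w x) - H a)

theorem localEnergy_eq {N m : ℕ} {H : EuclideanSpace ℝ (Fin m) → ℝ} (hH : Continuous H)
    (a : EuclideanSpace ℝ (Fin m)) (R : ℝ)
    {w : EuclideanSpace ℝ (Fin N) → EuclideanSpace ℝ (Fin m)} (hw : ContDiff ℝ 1 w) :
    localEnergy H a R w =
      (1 / 2) * (∑ i, ∫ x in ball 0 R, ‖∇ (fun y => w y i) x‖ ^ 2)
        + ∫ x in ball 0 R, (H (w x) - H a) := by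
  have integrableOn_ball {f : EuclideanSpace ℝ (Fin N) → ℝ} (hf : Continuous f) :
      IntegrableOn f (ball 0 R) :=
    (hf.locallyIntegrable.integrableOn_isCompact (isCompact_closedBall 0 R)).mono_set
      ball_subset_closedBall
  have hgrad (i : Fin m) : Continuous fun x => ‖∇ (fun y => w y i) x‖ ^ 2 :=
    ((EuclideanSpace.proj (𝕜 := ℝ) i).contDiff.comp hw).continuous_gradient.norm.pow 2
  have := hw.continuous
  rw [localEnergy, ← integral_finsetSum _ fun i _ => integrableOn_ball (hgrad i),
    ← integral_const_mul, ← integral_add (integrableOn_ball (by fun_prop))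
      (integrableOn_ball (by fun_prop))]
  congr 1 with x
  ring

theorem stmt_14_general (n m : ℕ)
    (H : EuclideanSpace ℝ (Fin m) → ℝ) (hH : ContDiff ℝ 2 H)
    (u : EuclideanSpace ℝ (Fin (n + 1)) → EuclideanSpace ℝ (Fin m)) (hu : ContDiff ℝ 2 u)
    (hbd : ∀ i : Fin m, ∃ B : ℝ, ∀ x, |u x i| ≤ B)
    (hgradbd : ∀ i : Fin m, ∃ B : ℝ, ∀ x, ‖gradient (fun y => u y i) x‖ ≤ B)
    (hsol : IsSolution H u Set.univ)
    (a : EuclideanSpace ℝ (Fin m))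
    (hlim : ∀ (x' : EuclideanSpace ℝ (Fin n)) (i : Fin m),
      Tendsto (fun s : ℝ => u (snocPt x' s) i) atTop (nhds (a i)))
    (R : ℝ) :
    Tendsto (fun t : ℝ => ∫ x in ball (0 : EuclideanSpace ℝ (Fin (n + 1))) R,
        ((1 / 2) * ∑ i, ‖gradient
            (fun y => u (y + t • EuclideanSpace.single (Fin.last n) (1 : ℝ)) i) x‖ ^ 2
          + H (u (x + t • EuclideanSpace.single (Fin.last n) (1 : ℝ))) - H a))
      atTop (nhds 0) := by
  set e : EuclideanSpace ℝ (Fin (n + 1)) := EuclideanSpace.single (Fin.last n) 1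
  have hshift (t : ℝ) : ContDiff ℝ 2 fun y => u (y + t • e) :=
    hu.comp (contDiff_id.add contDiff_const)
  have hcoord (x : EuclideanSpace ℝ (Fin (n + 1))) (i : Fin m) :=
    tendsto_comp_add_smul_single_last (f := fun y => u y i) (hlim · i) x
  obtain ⟨K, hK, huK⟩ := exists_isCompact_forall_mem_of_abs_le u hbd
  have hgrad (i : Fin m) : Tendsto (fun t : ℝ => ∫ x in ball 0 R,
      ‖∇ (fun y => u (y + t • e) i) x‖ ^ 2) atTop (𝓝 0) := by
    obtain ⟨B₀, hB₀⟩ := hbd i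
    obtain ⟨B₁, hB₁⟩ := hgradbd i
    obtain ⟨B₂, hB₂⟩ := hK.exists_bound_of_continuousOn (f := Hp H i)
      ((hH.continuous_fderiv two_ne_zero).clm_apply continuous_const).continuousOn
    refine tendsto_setIntegral_ball_norm_gradient_sq (w := fun t y => u (y + t • e) i)
      (B₁ := B₁) (B₂ := B₂) (fun t => (EuclideanSpace.proj i).contDiff.comp (hshift t))
      (fun t x => hB₀ _) (fun t x => ?_) (fun t x => ?_) (hcoord · i) R
    · rw [gradient_comp_add_right (fun y => u y i)]
      exact hB₁ _
    · rw [lap_comp_add_right (fun y => u y i), hsol i _ (Set.mem_univ _), ← Real.norm_eq_abs]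
      exact hB₂ _ (huK _)
  have hpot := tendsto_setIntegral_comp_sub_of_tendsto
    (measure_ball_lt_top (μ := volume) (x := 0) (r := R)).ne hH.continuous hK
    (fun t => (hshift t).continuous) (fun t x => huK _) fun x =>
      ((PiLp.continuous_toLp 2 _).tendsto a.ofLp).comp (tendsto_pi_nhds.2 (hcoord x))
  change Tendsto (fun t => localEnergy H a R fun y => u (y + t • e)) atTop (𝓝 0)
  simp_rw [localEnergy_eq hH.continuous a R ((hshift _).of_le one_le_two)]
  simpa only [Finset.sum_const_zero, mul_zero, add_zero] using
    ((tendsto_finsetSum Finset.univ fun i _ => hgrad i).const_mul (1 / 2)).add hpot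

/-- if `u(x', x_N) → a` as `x_N → +∞`, then the energy of the shifted
solution `u^t` over any fixed ball tends to `0` as `t → +∞`. -/
theorem stmt_14 (n m : ℕ)
    (H : EuclideanSpace ℝ (Fin m) → ℝ) (hH : ContDiff ℝ 2 H)
    (u : EuclideanSpace ℝ (Fin (n + 1)) → EuclideanSpace ℝ (Fin m)) (hu : ContDiff ℝ 2 u)
    (hbd : ∀ i : Fin m, ∃ B : ℝ, ∀ x, |u x i| ≤ B)
    (hgradbd : ∀ i : Fin m, ∃ B : ℝ, ∀ x, ‖gradient (fun y => u y i) x‖ ≤ B)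
    (hsol : IsSolution H u Set.univ)
    (a : EuclideanSpace ℝ (Fin m))
    (hlim : ∀ (x' : EuclideanSpace ℝ (Fin n)) (i : Fin m),
      Tendsto (fun s : ℝ => u (snocPt x' s) i) atTop (nhds (a i)))
    (R : ℝ) (hR : 0 < R) :
    Tendsto (fun t : ℝ => ∫ x in ball (0 : EuclideanSpace ℝ (Fin (n + 1))) R,
        ((1 / 2) * ∑ i, ‖gradient
            (fun y => u (y + t • EuclideanSpace.single (Fin.last n) (1 : ℝ)) i) x‖ ^ 2
          + H (u (x + t • EuclideanSpace.single (Fin.last n) (1 : ℝ))) - H a))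
      atTop (nhds 0) :=
  stmt_14_general n m H hH u hu hbd hgradbd hsol a hlim R
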